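/- arXiv:1704.01982 — 5 statements merged into one kernel-verified Lean document; each statement's English description precedes it below -/
import Mathlib

section
/- With F, r, N, Γ = F/[F,N] as above, the quotient map Γ → F/N together with the inclusion of the subgroup generated by [r] yields a central extension 1 → ⟨[r]⟩ → Γ → F/N → 1; that is, the kernel of the natural surjection Γ → F/N equals N/[F,N], this kernel is contained in the center of Γ, and it is generated by the class of r. -/
/-!
Everything in `N` commutes with everything modulo `⁅F, N⁆`, so `N/⁅F, N⁆` is central in `Γ`.
It is the image of the normal closure of `r`, i.e. the normal closure of the central element `[r]`,
and the normal closure of a central element is just the cyclic group it generates.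
-/

open scoped commutatorElement

namespace Subgroup

variable {G : Type*} [Group G]

theorem normal_of_le_center {H : Subgroup G} (hH : H ≤ center G) : H.Normal where
  conj_mem n hn g := by
    rw [mem_center_iff.mp (hH hn) g, mul_inv_cancel_right]
    exact hn

theorem normalClosure_singleton_eq_zpowers {g : G} (hg : g ∈ center G) :
    normalClosure {g} = zpowers g := by
  have := normal_of_le_center (zpowers_le.mpr hg)
  refine le_antisymm (normalClosure_le_normal ?_) (zpowers_le.mpr (subset_normalClosure rfl))
  simp

end Subgroup

namespace QuotientGroup

variable {G : Type*} [Group G]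

theorem map_mk'_le_center_of_commutator_le {N K : Subgroup G} [K.Normal]
    (hK : ⁅(⊤ : Subgroup G), N⁆ ≤ K) : N.map (mk' K) ≤ Subgroup.center (G ⧸ K) := by
  rw [← Subgroup.commutator_top_left_eq_bot_iff_le_center,
    ← Subgroup.map_top_of_surjective _ (mk'_surjective K), ← Subgroup.map_commutator,
    Subgroup.map_eq_bot_iff, ker_mk']
  exact hK

end QuotientGroup

open Subgroup QuotientGroup in
theorem stmt1_general (ℓ : ℕ)
    (r : FreeGroup (Fin ℓ × Bool))
    (p : (FreeGroup (Fin ℓ × Bool) ⧸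
            ⁅(⊤ : Subgroup (FreeGroup (Fin ℓ × Bool))), Subgroup.normalClosure {r}⁆) →*
          (FreeGroup (Fin ℓ × Bool) ⧸ Subgroup.normalClosure {r}))
    (hp : p = QuotientGroup.map
        ⁅(⊤ : Subgroup (FreeGroup (Fin ℓ × Bool))), Subgroup.normalClosure {r}⁆
        (Subgroup.normalClosure {r}) (MonoidHom.id _)
        (le_trans (Subgroup.commutator_le_right _ _) le_rfl)) :
    p.ker = (Subgroup.normalClosure {r}).map
        (QuotientGroup.mk' ⁅(⊤ : Subgroup (FreeGroup (Fin ℓ × Bool))),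
          Subgroup.normalClosure {r}⁆)
    ∧ p.ker ≤ Subgroup.center _
    ∧ p.ker = Subgroup.zpowers (QuotientGroup.mk r) := by
  have hker : p.ker = (normalClosure {r}).map (mk' ⁅⊤, normalClosure {r}⁆) := by
    rw [hp, ker_map, comap_id]
  have hcenter : p.ker ≤ center _ := hker ▸ map_mk'_le_center_of_commutator_le le_rfl
  refine ⟨hker, hcenter, ?_⟩
  rw [hker, map_normalClosure _ _ (mk'_surjective _), Set.image_singleton]
  refine normalClosure_singleton_eq_zpowers (hcenter ?_)
  rw [hker]
  exact mem_map_of_mem _ (subset_normalClosure rfl)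

/-- With `F` the free group on `x₁,y₁,…,x_ℓ,y_ℓ`, `r = [x₁,y₁]⋯[x_ℓ,y_ℓ]`,
`N` the normal closure of `r`, and `Γ = F/[F,N]`, the natural surjection
`Γ → F/N` has kernel `N/[F,N]`, this kernel is central in `Γ`, and it is
generated by the class of `r`; thus `1 → ⟨[r]⟩ → Γ → F/N → 1` is a central
extension. -/
theorem stmt1 (ℓ : ℕ) (hℓ : 1 ≤ ℓ)
    (r : FreeGroup (Fin ℓ × Bool))
    (hr : r = ((List.finRange ℓ).map fun i =>
      ⁅FreeGroup.of (i, false), FreeGroup.of (i, true)⁆).prod)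
    (p : (FreeGroup (Fin ℓ × Bool) ⧸
            ⁅(⊤ : Subgroup (FreeGroup (Fin ℓ × Bool))), Subgroup.normalClosure {r}⁆) →*
          (FreeGroup (Fin ℓ × Bool) ⧸ Subgroup.normalClosure {r}))
    (hp : p = QuotientGroup.map
        ⁅(⊤ : Subgroup (FreeGroup (Fin ℓ × Bool))), Subgroup.normalClosure {r}⁆
        (Subgroup.normalClosure {r}) (MonoidHom.id _)
        (le_trans (Subgroup.commutator_le_right _ _) le_rfl)) :
    p.ker = (Subgroup.normalClosure {r}).map
        (QuotientGroup.mk' ⁅(⊤ : Subgroup (FreeGroup (Fin ℓ × Bool))),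
          Subgroup.normalClosure {r}⁆)
    ∧ p.ker ≤ Subgroup.center _
    ∧ p.ker = Subgroup.zpowers (QuotientGroup.mk r) :=
  stmt1_general ℓ r p hp
end

section
/- Let G be a Lie group with Lie algebra 𝔤 and Y : [0,1] → 𝔤 a smooth curve. Then the derivative of exp ∘ Y satisfies (d/dt)(exp(Y(t))) · exp(Y(t))^{-1} = ((e^{ad(Y(t))} − 1)/ad(Y(t))) (Y'(t)), where (e^{ad X} − 1)/ad X denotes the convergent power series Σ_{k≥0} ad(X)^k/(k+1)!. -/
set_option linter.unusedSectionVars false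
set_option maxHeartbeats 1000000

open Finset NormedSpace

section stmt10aux
variable {A : Type*} [NormedRing A] [NormedAlgebra ℝ A]

private lemma adIter_norm_le (X c : A) : ∀ k : ℕ,
    ‖(fun Z : A => X * Z - Z * X)^[k] c‖ ≤ (2 * ‖X‖) ^ k * ‖c‖
  | 0 => by simp
  | (k+1) => by
    rw [Function.iterate_succ_apply']
    set d := (fun Z : A => X * Z - Z * X)^[k] c with hd
    calc ‖X * d - d * X‖ ≤ ‖X * d‖ + ‖d * X‖ := norm_sub_le _ _
      _ ≤ ‖X‖ * ‖d‖ + ‖d‖ * ‖X‖ := add_le_add (norm_mul_le _ _) (norm_mul_le _ _)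
      _ = 2 * ‖X‖ * ‖d‖ := by ring
      _ ≤ 2 * ‖X‖ * ((2 * ‖X‖) ^ k * ‖c‖) := by
          have := adIter_norm_le X c k
          have h2 : (0:ℝ) ≤ 2 * ‖X‖ := by positivity
          exact mul_le_mul_of_nonneg_left this h2
      _ = (2 * ‖X‖) ^ (k+1) * ‖c‖ := by ring

private lemma norm_pow_le_one_mul (X : A) : ∀ i : ℕ, ‖X ^ i‖ ≤ ‖(1 : A)‖ * ‖X‖ ^ i
  | 0 => by simp
  | (i+1) => by
    calc ‖X ^ (i+1)‖ = ‖X ^ i * X‖ := by rw [pow_succ]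
      _ ≤ ‖X ^ i‖ * ‖X‖ := norm_mul_le _ _
      _ ≤ (‖(1:A)‖ * ‖X‖ ^ i) * ‖X‖ :=
          mul_le_mul_of_nonneg_right (norm_pow_le_one_mul X i) (norm_nonneg X)
      _ = ‖(1:A)‖ * ‖X‖ ^ (i+1) := by ring

private lemma pow_mul_expand (X c : A) : ∀ i : ℕ, X ^ i * c =
    ∑ a ∈ range (i+1), (i.choose a : ℝ) •
      ((fun Z : A => X * Z - Z * X)^[a] c * X ^ (i - a))
  | 0 => by simp
  | (i+1) => by
    set ad : A → A := fun Z : A => X * Z - Z * X with had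
    have key : X ^ (i+1) * c = X * (X ^ i * c) := by rw [pow_succ', mul_assoc]
    rw [key, pow_mul_expand X c i, Finset.mul_sum]
    have step : ∀ a ∈ range (i+1),
        X * ((i.choose a : ℝ) • (ad^[a] c * X ^ (i - a)))
          = (i.choose a : ℝ) • (ad^[a+1] c * X ^ (i - a))
            + (i.choose a : ℝ) • (ad^[a] c * X ^ (i + 1 - a)) := by
      intro a ha
      have hX : X * ad^[a] c = ad^[a+1] c + ad^[a] c * X := by
        rw [Function.iterate_succ_apply', had]; simp
      have hle : a ≤ i := by simpa using Nat.lt_succ_iff.mp (mem_range.mp ha)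
      have hpow : X * X ^ (i - a) = X ^ (i + 1 - a) := by
        rw [← pow_succ']; congr 1; omega
      rw [mul_smul_comm, ← mul_assoc, hX, add_mul, smul_add]
      congr 2
      rw [mul_assoc, hpow]
    rw [Finset.sum_congr rfl step, Finset.sum_add_distrib]
    have rhs : ∑ a ∈ range (i+2), ((i+1).choose a : ℝ) • (ad^[a] c * X ^ (i + 1 - a))
        = (∑ a ∈ range (i+1), (i.choose a : ℝ) • (ad^[a+1] c * X ^ (i - a)))
          + ∑ a ∈ range (i+1), (i.choose a : ℝ) • (ad^[a] c * X ^ (i + 1 - a)) := by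
      rw [Finset.sum_range_succ' (fun a => ((i+1).choose a : ℝ) • (ad^[a] c * X ^ (i + 1 - a)))]
      have pascal : ∀ a ∈ range (i+1),
          (((i+1).choose (a+1) : ℝ)) • (ad^[a+1] c * X ^ (i + 1 - (a+1)))
            = (i.choose a : ℝ) • (ad^[a+1] c * X ^ (i - a))
              + (i.choose (a+1) : ℝ) • (ad^[a+1] c * X ^ (i + 1 - (a+1))) := by
        intro a ha
        have h1 : (i+1).choose (a+1) = i.choose a + i.choose (a+1) := Nat.choose_succ_succ _ _
        have h2 : i + 1 - (a + 1) = i - a := by omega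
        rw [h1, h2, Nat.cast_add, add_smul]
      rw [Finset.sum_congr rfl pascal, Finset.sum_add_distrib]
      have reindex : (∑ a ∈ range (i+1), (i.choose (a+1) : ℝ) • (ad^[a+1] c * X ^ (i + 1 - (a+1))))
            + ((i+1).choose 0 : ℝ) • (ad^[0] c * X ^ (i + 1 - 0))
          = ∑ a ∈ range (i+1), (i.choose a : ℝ) • (ad^[a] c * X ^ (i + 1 - a)) := by
        have htop : ∑ a ∈ range (i+2), (i.choose a : ℝ) • (ad^[a] c * X ^ (i + 1 - a))
            = ∑ a ∈ range (i+1), (i.choose a : ℝ) • (ad^[a] c * X ^ (i + 1 - a)) := by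
          rw [Finset.sum_range_succ]
          simp [Nat.choose_succ_self]
        rw [← htop, Finset.sum_range_succ'
          (fun a => (i.choose a : ℝ) • (ad^[a] c * X ^ (i + 1 - a)))]
        simp
      rw [add_assoc, reindex]
    rw [rhs]

private lemma sum_diag_eq (X c : A) (n : ℕ) :
    ∑ i ∈ range (n+1), X ^ i * c * X ^ (n - i)
      = ∑ a ∈ range (n+1), (((n+1).choose (a+1) : ℝ)) •
          ((fun Z : A => X * Z - Z * X)^[a] c * X ^ (n - a)) := by
  set ad : A → A := fun Z : A => X * Z - Z * X with had
  have step : ∀ i ∈ range (n+1), X ^ i * c * X ^ (n - i)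
      = ∑ a ∈ range (i+1), (i.choose a : ℝ) • (ad^[a] c * X ^ (n - a)) := by
    intro i hi
    have hi' : i ≤ n := by simpa using Nat.lt_succ_iff.mp (mem_range.mp hi)
    rw [pow_mul_expand X c i, Finset.sum_mul]
    refine Finset.sum_congr rfl fun a ha => ?_
    have ha' : a ≤ i := by simpa using Nat.lt_succ_iff.mp (mem_range.mp ha)
    rw [smul_mul_assoc, mul_assoc, ← pow_add]
    congr 3
    omega
  rw [Finset.sum_congr rfl step]
  rw [Finset.sum_comm' (s := range (n+1)) (t := fun i => range (i+1))
    (t' := range (n+1)) (s' := fun a => Finset.Icc a n)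
    (by intro i a; simp [Nat.lt_succ_iff]; omega)]
  refine Finset.sum_congr rfl fun a _ => ?_
  rw [← Finset.sum_smul]
  congr 1
  rw [← Nat.cast_sum, Nat.sum_Icc_choose]

private lemma coeff_eq (n a : ℕ) (h : a ≤ n) :
    ((n+1).factorial : ℝ)⁻¹ * ((n+1).choose (a+1) : ℝ)
      = ((a+1).factorial : ℝ)⁻¹ * ((n-a).factorial : ℝ)⁻¹ := by
  have key : (n+1).choose (a+1) * (a+1).factorial * (n-a).factorial = (n+1).factorial := by
    have := Nat.choose_mul_factorial_mul_factorial (Nat.succ_le_succ h)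
    simpa [Nat.succ_sub_succ] using this
  have h1 : ((n+1).factorial : ℝ) ≠ 0 := Nat.cast_ne_zero.mpr (Nat.factorial_ne_zero _)
  have h2 : ((a+1).factorial : ℝ) ≠ 0 := Nat.cast_ne_zero.mpr (Nat.factorial_ne_zero _)
  have h3 : ((n-a).factorial : ℝ) ≠ 0 := Nat.cast_ne_zero.mpr (Nat.factorial_ne_zero _)
  have key' : ((n+1).choose (a+1) : ℝ) * (a+1).factorial * (n-a).factorial
      = ((n+1).factorial : ℝ) := by exact_mod_cast congrArg (Nat.cast : ℕ → ℝ) key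
  field_simp
  linarith [key']

variable [CompleteSpace A]

private lemma summable_norm_S (X c : A) :
    Summable fun k : ℕ => ‖((k+1).factorial : ℝ)⁻¹ • (fun Z : A => X * Z - Z * X)^[k] c‖ := by
  refine Summable.of_nonneg_of_le (fun k => norm_nonneg _) (fun k => ?_)
    (((Real.summable_pow_div_factorial (2 * ‖X‖)).mul_right ‖c‖))
  rw [norm_smul, Real.norm_eq_abs, abs_of_nonneg (by positivity)]
  calc ((k+1).factorial : ℝ)⁻¹ * ‖(fun Z : A => X * Z - Z * X)^[k] c‖
      ≤ ((k).factorial : ℝ)⁻¹ * ((2 * ‖X‖) ^ k * ‖c‖) := by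
        apply mul_le_mul
        · apply inv_anti₀
          · exact_mod_cast Nat.factorial_pos k
          · exact_mod_cast Nat.factorial_le (Nat.le_succ k)
        · exact adIter_norm_le X c k
        · exact norm_nonneg _
        · positivity
    _ = (2 * ‖X‖) ^ k / (k.factorial : ℝ) * ‖c‖ := by ring

private lemma S_mul_exp (X c : A) :
    (∑' k : ℕ, ((k+1).factorial : ℝ)⁻¹ • (fun Z : A => X * Z - Z * X)^[k] c) * exp X
      = ∑' n : ℕ, ((n+1).factorial : ℝ)⁻¹ • ∑ i ∈ range (n+1), X ^ i * c * X ^ (n - i) := by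
  set ad : A → A := fun Z : A => X * Z - Z * X with had
  rw [exp_eq_tsum ℝ]
  rw [tsum_mul_tsum_eq_tsum_sum_range_of_summable_norm (summable_norm_S X c)
    (norm_expSeries_summable' (𝕂 := ℝ) X)]
  refine tsum_congr fun n => ?_
  rw [sum_diag_eq, Finset.smul_sum]
  refine Finset.sum_congr rfl fun a ha => ?_
  have ha' : a ≤ n := by simpa using Nat.lt_succ_iff.mp (mem_range.mp ha)
  rw [smul_mul_assoc, mul_smul_comm, smul_smul, smul_smul, ← coeff_eq n a ha']

private lemma summable_term (X c : A) :
    Summable fun n : ℕ =>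
      ((n.factorial : ℝ))⁻¹ • ∑ i ∈ range n, X ^ i * c * X ^ (n - 1 - i) := by
  set M : ℝ := ‖(1 : A)‖ with hM
  have hM0 : 0 ≤ M := norm_nonneg _
  set u : ℕ → ℝ := fun n => (n : ℝ) * (M^2 * ‖c‖ * ‖X‖^(n-1)) * ((n.factorial : ℝ))⁻¹ with hu
  have husum : Summable u := by
    rw [← summable_nat_add_iff 1]
    have : (fun n => u (n+1)) = fun n => (M^2 * ‖c‖) * (‖X‖ ^ n / (n.factorial : ℝ)) := by
      funext n
      rw [hu]
      have hfac : ((n+1).factorial : ℝ) = (n+1) * (n.factorial : ℝ) := by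
        exact_mod_cast Nat.factorial_succ n
      have hn : (n : ℝ) + 1 ≠ 0 := by positivity
      simp only [Nat.add_sub_cancel, Nat.cast_add, Nat.cast_one]
      rw [hfac]
      field_simp
    rw [this]
    exact (Real.summable_pow_div_factorial ‖X‖).mul_left _
  refine Summable.of_norm_bounded husum fun n => ?_
  rw [norm_smul, Real.norm_eq_abs, abs_of_nonneg (by positivity)]
  have hterm : ∀ i ∈ range n, ‖X ^ i * c * X ^ (n - 1 - i)‖ ≤ M^2 * ‖c‖ * ‖X‖^(n-1) := by
    intro i hi
    have hi' : i < n := mem_range.mp hi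
    calc ‖X ^ i * c * X ^ (n - 1 - i)‖
        ≤ ‖X ^ i‖ * ‖c‖ * ‖X ^ (n - 1 - i)‖ :=
          le_trans (norm_mul_le _ _)
            (mul_le_mul_of_nonneg_right (norm_mul_le _ _) (norm_nonneg _))
      _ ≤ (M * ‖X‖ ^ i) * ‖c‖ * (M * ‖X‖ ^ (n - 1 - i)) := by
          apply mul_le_mul
          · exact mul_le_mul_of_nonneg_right (norm_pow_le_one_mul X i) (norm_nonneg c)
          · exact norm_pow_le_one_mul X _
          · exact norm_nonneg _
          · positivity
      _ = M^2 * ‖c‖ * (‖X‖ ^ i * ‖X‖ ^ (n-1-i)) := by ring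
      _ = M^2 * ‖c‖ * ‖X‖^(n-1) := by rw [← pow_add]; congr 2; omega
  calc ((n.factorial : ℝ))⁻¹ * ‖∑ i ∈ range n, X ^ i * c * X ^ (n - 1 - i)‖
      ≤ ((n.factorial : ℝ))⁻¹ * (n * (M^2 * ‖c‖ * ‖X‖^(n-1))) := by
        apply mul_le_mul_of_nonneg_left _ (by positivity)
        calc ‖∑ i ∈ range n, X ^ i * c * X ^ (n - 1 - i)‖
            ≤ ∑ i ∈ range n, ‖X ^ i * c * X ^ (n - 1 - i)‖ := norm_sum_le _ _
          _ ≤ ∑ _i ∈ range n, M^2 * ‖c‖ * ‖X‖^(n-1) := Finset.sum_le_sum hterm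
          _ = n * (M^2 * ‖c‖ * ‖X‖^(n-1)) := by rw [Finset.sum_const, card_range]; ring
    _ = u n := by rw [hu]; ring

private lemma hasDerivAt_pow_comp {Y : ℝ → A} {y' : A} {u : ℝ} (h : HasDerivAt Y y' u) :
    ∀ n : ℕ, HasDerivAt (fun v => Y v ^ n)
      (∑ i ∈ range n, Y u ^ i * y' * Y u ^ (n - 1 - i)) u
  | 0 => by simpa using hasDerivAt_const u (1 : A)
  | (n+1) => by
    have hmul := (hasDerivAt_pow_comp h n).mul h
    have key : (∑ i ∈ range n, Y u ^ i * y' * Y u ^ (n - 1 - i)) * Y u + Y u ^ n * y'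
        = ∑ i ∈ range (n+1), Y u ^ i * y' * Y u ^ (n + 1 - 1 - i) := by
      rw [Finset.sum_range_succ]
      simp only [Nat.add_sub_cancel]
      rw [Finset.sum_mul]
      congr 1
      · refine Finset.sum_congr rfl fun i hi => ?_
        have hi' : i < n := mem_range.mp hi
        rw [mul_assoc, ← pow_succ]
        congr 2
        omega
      · simp
    have heq : ((fun v => Y v ^ n) * Y) = fun v => Y v ^ (n+1) := by
      funext v; rw [Pi.mul_apply, pow_succ]
    rw [heq] at hmul
    rw [← key]
    exact hmul

private lemma hasDerivAt_exp_comp {Y : ℝ → A} (hY : ContDiff ℝ (⊤ : ℕ∞) Y) (t : ℝ) :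
    HasDerivAt (fun u => exp (Y u))
      (∑' n : ℕ, (n.factorial : ℝ)⁻¹ •
        ∑ i ∈ range n, Y t ^ i * deriv Y t * Y t ^ (n - 1 - i)) t := by
  have hYd : Differentiable ℝ Y := hY.differentiable (by simp)
  obtain ⟨C, hC⟩ := (isCompact_Icc (a := t - 1) (b := t + 1)).exists_bound_of_continuousOn
    hY.continuous.continuousOn
  obtain ⟨D, hD⟩ := (isCompact_Icc (a := t - 1) (b := t + 1)).exists_bound_of_continuousOn
    (hY.continuous_deriv (by simp)).continuousOn
  have htK : t ∈ Set.Icc (t-1) (t+1) := by constructor <;> linarith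
  have hC0 : 0 ≤ C := le_trans (norm_nonneg _) (hC t htK)
  have hD0 : 0 ≤ D := le_trans (norm_nonneg _) (hD t htK)
  set M : ℝ := ‖(1 : A)‖ with hM
  have hM0 : 0 ≤ M := norm_nonneg _
  set u : ℕ → ℝ := fun n => (n : ℝ) * (M^2 * D * C^(n-1)) * ((n.factorial : ℝ))⁻¹ with hu
  have husum : Summable u := by
    rw [← summable_nat_add_iff 1]
    have : (fun n => u (n+1)) = fun n => (M^2 * D) * (C ^ n / (n.factorial : ℝ)) := by
      funext n
      rw [hu]
      have hfac : ((n+1).factorial : ℝ) = (n+1) * (n.factorial : ℝ) := by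
        exact_mod_cast Nat.factorial_succ n
      have hn : (n : ℝ) + 1 ≠ 0 := by positivity
      simp only [Nat.add_sub_cancel, Nat.cast_add, Nat.cast_one]
      rw [hfac]
      field_simp
    rw [this]
    exact (Real.summable_pow_div_factorial C).mul_left _
  set g : ℕ → ℝ → A := fun n v => ((n.factorial : ℝ))⁻¹ • Y v ^ n with hg
  set g' : ℕ → ℝ → A := fun n v => ((n.factorial : ℝ))⁻¹ •
    ∑ i ∈ range n, Y v ^ i * deriv Y v * Y v ^ (n - 1 - i) with hg'
  have hderiv : ∀ n : ℕ, ∀ y ∈ Set.Ioo (t-1) (t+1), HasDerivAt (g n) (g' n y) y := by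
    intro n y _
    exact (hasDerivAt_pow_comp (hYd y).hasDerivAt n).const_smul ((n.factorial : ℝ))⁻¹
  have hbound : ∀ n : ℕ, ∀ y ∈ Set.Ioo (t-1) (t+1), ‖g' n y‖ ≤ u n := by
    intro n y hy
    have hyK : y ∈ Set.Icc (t-1) (t+1) := Set.mem_Icc_of_Ioo hy
    rw [hg']
    simp only
    rw [norm_smul, Real.norm_eq_abs, abs_of_nonneg (by positivity)]
    have hterm : ∀ i ∈ range n, ‖Y y ^ i * deriv Y y * Y y ^ (n - 1 - i)‖
        ≤ M^2 * D * C^(n-1) := by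
      intro i hi
      have hi' : i < n := mem_range.mp hi
      calc ‖Y y ^ i * deriv Y y * Y y ^ (n - 1 - i)‖
          ≤ ‖Y y ^ i‖ * ‖deriv Y y‖ * ‖Y y ^ (n - 1 - i)‖ :=
            le_trans (norm_mul_le _ _)
              (mul_le_mul_of_nonneg_right (norm_mul_le _ _) (norm_nonneg _))
        _ ≤ (M * ‖Y y‖ ^ i) * D * (M * ‖Y y‖ ^ (n - 1 - i)) := by
            apply mul_le_mul
            · exact mul_le_mul (norm_pow_le_one_mul _ _) (hD y hyK) (norm_nonneg _)
                (by positivity)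
            · exact norm_pow_le_one_mul _ _
            · exact norm_nonneg _
            · positivity
        _ ≤ (M * C ^ i) * D * (M * C ^ (n - 1 - i)) := by
            have hyC : ‖Y y‖ ≤ C := hC y hyK
            have h1 : ‖Y y‖ ^ i ≤ C ^ i := pow_le_pow_left₀ (norm_nonneg _) hyC i
            have h2 : ‖Y y‖ ^ (n-1-i) ≤ C ^ (n-1-i) := pow_le_pow_left₀ (norm_nonneg _) hyC _
            apply mul_le_mul
            · exact mul_le_mul (mul_le_mul_of_nonneg_left h1 hM0) le_rfl hD0 (by positivity)
            · exact mul_le_mul_of_nonneg_left h2 hM0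
            · positivity
            · positivity
        _ = M^2 * D * (C ^ i * C ^ (n-1-i)) := by ring
        _ = M^2 * D * C^(n-1) := by rw [← pow_add]; congr 2; omega
    calc ((n.factorial : ℝ))⁻¹ * ‖∑ i ∈ range n, Y y ^ i * deriv Y y * Y y ^ (n - 1 - i)‖
        ≤ ((n.factorial : ℝ))⁻¹ * (n * (M^2 * D * C^(n-1))) := by
          apply mul_le_mul_of_nonneg_left _ (by positivity)
          calc ‖∑ i ∈ range n, Y y ^ i * deriv Y y * Y y ^ (n - 1 - i)‖
              ≤ ∑ i ∈ range n, ‖Y y ^ i * deriv Y y * Y y ^ (n - 1 - i)‖ :=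
                norm_sum_le _ _
            _ ≤ ∑ _i ∈ range n, M^2 * D * C^(n-1) := Finset.sum_le_sum hterm
            _ = n * (M^2 * D * C^(n-1)) := by rw [Finset.sum_const, card_range]; ring
      _ = u n := by rw [hu]; ring
  have hconv : Summable fun n => g n t := expSeries_summable' (𝕂 := ℝ) (Y t)
  have htmem : t ∈ Set.Ioo (t-1) (t+1) := Set.mem_Ioo.mpr ⟨by linarith, by linarith⟩
  have hmain := hasDerivAt_tsum_of_isPreconnected (y₀ := t) (y := t) husum isOpen_Ioo
    isPreconnected_Ioo hderiv hbound htmem hconv htmem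
  have hfun : (fun z => ∑' n : ℕ, g n z) = fun u => exp (Y u) := by
    funext z
    rw [exp_eq_tsum ℝ]
  rw [hfun] at hmain
  exact hmain

end stmt10aux

/-- For a smooth curve `Y : [0,1] → 𝔤` in the Lie algebra of a (linear) Lie group
(realized as a Banach algebra `A`), the derivative of `exp ∘ Y` satisfies
`(d/dt) exp(Y(t)) · exp(Y(t))⁻¹ = ((e^{ad Y(t)} − 1)/ad Y(t)) (Y'(t))`, the right
hand side being the convergent series `Σ_{k≥0} ad(Y(t))^k (Y'(t)) / (k+1)!`. -/
theorem stmt10 {A : Type*} [NormedRing A] [NormedAlgebra ℝ A] [CompleteSpace A]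
    (Y : ℝ → A) (hY : ContDiff ℝ (⊤ : ℕ∞) Y) :
    ∀ t ∈ Set.Icc (0:ℝ) 1,
      deriv (fun u => NormedSpace.exp (Y u)) t
          * Ring.inverse (NormedSpace.exp (Y t))
        = ∑' k : ℕ, (((k + 1).factorial : ℝ))⁻¹ •
            ((fun Z : A => Y t * Z - Z * Y t)^[k] (deriv Y t)) := by
  intro t _
  let +nondep : NormedAlgebra ℚ A := .restrictScalars ℚ ℝ A
  set X : A := Y t with hX
  set c : A := deriv Y t with hc
  rw [(hasDerivAt_exp_comp hY t).deriv, Ring.inverse_exp]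
  have hE : (∑' n : ℕ, (n.factorial : ℝ)⁻¹ •
        ∑ i ∈ range n, X ^ i * c * X ^ (n - 1 - i))
      = (∑' k : ℕ, ((k+1).factorial : ℝ)⁻¹ • (fun Z : A => X * Z - Z * X)^[k] c)
        * NormedSpace.exp X := by
    rw [S_mul_exp X c, Summable.tsum_eq_zero_add (summable_term X c)]
    simp only [Nat.factorial_zero, Nat.cast_one, inv_one, range_zero, Finset.sum_empty,
      smul_zero, zero_add]
    exact tsum_congr fun n => by norm_num
  rw [hE, mul_assoc]
  have hinv : NormedSpace.exp X * NormedSpace.exp (-X) = 1 := by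
    rw [← NormedSpace.exp_add_of_commute (Commute.refl X).neg_right, add_neg_cancel,
      NormedSpace.exp_zero]
  rw [hinv, mul_one]
end

section
/- Let a Lie group G act smoothly on a manifold M with a slice S at q ∈ M, and let V be a neighborhood of q of the form V = χ(U)·S arising from the local product decomposition of the slice (property (S4)). Then every point v ∈ V has stabilizer conjugate to a subgroup of G_q: there exists x ∈ G with x G_v x^{-1} ⊆ G_q. -/
/-- If `S` is a slice at `q` (property (S3)) and `v` lies in the neighborhood
`V = χ(U)·S` swept out from the slice along the orbit (property (S4)), i.e. `v`
is a translate of a point of the slice, then the stabilizer of `v` is conjugate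
to a subgroup of `G_q`. -/
theorem stmt13 {G M : Type*} [Group G] [MulAction G M]
    (q : M) (S : Set M)
    (hS3 : ∀ x : G, (∃ y ∈ S, x • y ∈ S) → x ∈ MulAction.stabilizer G q)
    (v : M) (hv : ∃ g : G, ∃ y ∈ S, v = g • y) :
    ∃ x : G, ∀ h ∈ MulAction.stabilizer G v,
      x * h * x⁻¹ ∈ MulAction.stabilizer G q := by
  obtain ⟨g, y, hy, rfl⟩ := hv
  refine ⟨g⁻¹, fun h hh => ?_⟩
  apply hS3
  refine ⟨y, hy, ?_⟩
  have : h • g • y = g • y := hh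
  have : (g⁻¹ * h * g) • y = y := by
    simp [mul_smul, this]
  have h2 : (g⁻¹ * h * g⁻¹⁻¹) • y = y := by simpa using this
  rw [h2]; exact hy
end

section
/- Let G be a group acting on a set M, let H ⊴ G be a normal subgroup acting freely on M, let q ∈ M with stabilizer G_q, and let S ⊆ M satisfy: x·S ∩ S ≠ ∅ for x ∈ G implies x ∈ G_q. Let Ŝ = T·S for a subset T ⊆ G with e ∈ T such that T injects into G/(G_q H) and T^{-1}T ∩ G_q H ⊆ G_q. Then for x ∈ H, x·Ŝ ∩ Ŝ ≠ ∅ implies x = e. -/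
/-- Group-theoretic core of property (Ŝ3): let `G` act on `M`, let `H ⊴ G` act
freely, let `q ∈ M` and `S ⊆ M` satisfy the slice property
`x·S ∩ S ≠ ∅ → x ∈ G_q`, and let `T ⊆ G` contain `e`, inject into `G/(G_q H)`
and satisfy `T⁻¹T ∩ G_q H ⊆ G_q`.  Then for `x ∈ H`, `x·(T·S) ∩ (T·S) ≠ ∅`
implies `x = e`. -/
theorem stmt14 {G M : Type*} [Group G] [MulAction G M]
    (Hs : Subgroup G) [Hs.Normal]
    (hfree : ∀ h ∈ Hs, ∀ m : M, h • m = m → h = 1)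
    (q : M) (S : Set M)
    (hS3 : ∀ x : G, (∃ y ∈ S, x • y ∈ S) → x ∈ MulAction.stabilizer G q)
    (T : Set G) (hT1 : (1 : G) ∈ T)
    (hTinj : ∀ t₁ ∈ T, ∀ t₂ ∈ T,
      (∃ g ∈ MulAction.stabilizer G q, ∃ h ∈ Hs, t₁⁻¹ * t₂ = g * h) → t₁ = t₂)
    (hTT : ∀ t₁ ∈ T, ∀ t₂ ∈ T, ∀ g ∈ MulAction.stabilizer G q, ∀ h ∈ Hs,
      t₁⁻¹ * t₂ = g * h → t₁⁻¹ * t₂ ∈ MulAction.stabilizer G q) :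
    ∀ x ∈ Hs,
      (∃ t₁ ∈ T, ∃ s₁ ∈ S, ∃ t₂ ∈ T, ∃ s₂ ∈ S, x • t₁ • s₁ = t₂ • s₂) →
      x = 1 := by
  intro x hx ⟨t₁, ht₁, s₁, hs₁, t₂, ht₂, s₂, hs₂, heq⟩
  have key : (t₂⁻¹ * x * t₁) • s₁ = s₂ := by
    rw [mul_smul, mul_smul, heq, inv_smul_smul]
  have hg : t₂⁻¹ * x * t₁ ∈ MulAction.stabilizer G q :=
    hS3 _ ⟨s₁, hs₁, key ▸ hs₂⟩
  have hconj : t₁⁻¹ * x⁻¹ * t₁ ∈ Hs := by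
    have := Subgroup.Normal.conj_mem ‹Hs.Normal› _ (inv_mem hx) t₁⁻¹
    simpa using this
  have ht : t₂ = t₁ :=
    hTinj t₂ ht₂ t₁ ht₁ ⟨_, hg, _, hconj, by group⟩
  subst ht
  have hx' : t₂⁻¹ * x * t₂ ∈ Hs := by simpa using Subgroup.Normal.conj_mem ‹Hs.Normal› _ hx t₂⁻¹
  have h1 : t₂⁻¹ * x * t₂ = 1 := hfree _ hx' q hg
  have : x = t₂ * 1 * t₂⁻¹ := by rw [← h1]; group
  simpa using this
end

section
/- Let G be a Banach Lie group with Lie algebra 𝔤 and H ⊆ G a Lie subgroup whose Lie algebra 𝔥 admits a closed complement 𝔨 in 𝔤 (i.e., 𝔤 = 𝔨 ⊕ 𝔥 as topological vector spaces). Then there exists an open neighborhood V of 0 in 𝔨 such that the map μ : V × H → G, (X, y) ↦ exp(X)·y, is injective and a local diffeomorphism at every point of V × H. -/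
/-!
Write `φ(X, Y) = exp X * exp Y` on `𝔨 × 𝔥`. Its derivative at `0` is `(X, Y) ↦ X + Y`, an
isomorphism `𝔨 × 𝔥 ≃ 𝔤` since the complement is topological, so `φ` is a local homeomorphism
near `0`. Right translation by `y₀ ∈ H` turns the local inverse of `φ` into a continuous local
section of `μ` through `(X, y₀)` whenever `(X, 0)` lies in the domain of that inverse; hence `μ`
is open. For injectivity, `exp X₁ * y₁ = exp X₂ * y₂` makes `exp (-X₂) * exp X₁` an element of `H`
near `1`, which the Lie subgroup condition writes as `exp Y` with `Y ∈ 𝔥` small; then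
`φ(X₁, 0) = φ(X₂, Y)` and local injectivity of `φ` give `X₁ = X₂`. A continuous, injective and
open map is an open embedding, in particular a local homeomorphism.
-/

open NormedSpace Filter Topology Set Function

theorem Topology.IsOpenEmbedding.comp_of_injOn_of_nhds_le {X Y Z : Type*} [TopologicalSpace X]
    [TopologicalSpace Y] [TopologicalSpace Z] {ι : X → Y} {f : Y → Z} (hι : IsOpenEmbedding ι)
    (hf : Continuous f) (hinj : InjOn f (range ι))
    (hopen : ∀ y ∈ range ι, 𝓝 (f y) ≤ map f (𝓝 y)) : IsOpenEmbedding (f ∘ ι) := by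
  refine .of_continuous_injective_isOpenMap (hf.comp hι.continuous)
    (fun a b h => hι.injective (hinj (mem_range_self a) (mem_range_self b) h))
    (isOpenMap_iff_nhds_le.mpr fun x => ?_)
  rw [comp_apply, ← map_map, hι.map_nhds_eq]
  exact hopen _ (mem_range_self x)

/-- The paper's `μ`, defined on all of `𝔨 × H`. -/
noncomputable def expMul {A : Type*} [NormedRing A] [NormedAlgebra ℝ A] (𝔨 : Submodule ℝ A)
    (H : Subgroup Aˣ) (p : 𝔨 × H) : A :=
  exp (p.1 : A) * ((p.2 : Aˣ) : A)

section BanachAlgebra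

variable {A : Type*} [NormedRing A] [NormedAlgebra ℝ A] [CompleteSpace A]

noncomputable def expUnit (x : A) : Aˣ where
  val := exp x
  inv := exp (-x)
  val_inv := by
    let := NormedAlgebra.restrictScalars ℚ ℝ A
    rw [← exp_add_of_commute (Commute.refl x).neg_right, add_neg_cancel, exp_zero]
  inv_val := by
    let := NormedAlgebra.restrictScalars ℚ ℝ A
    rw [← exp_add_of_commute (Commute.refl x).neg_left, neg_add_cancel, exp_zero]

@[simp] lemma val_expUnit (x : A) : (expUnit x : A) = exp x := rfl

@[simp] lemma val_inv_expUnit (x : A) : (↑(expUnit x)⁻¹ : A) = exp (-x) := rfl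

lemma exp_mul_exp_neg (x : A) : exp x * exp (-x) = 1 := (expUnit x).mul_inv

@[simp] lemma expUnit_zero : expUnit (0 : A) = 1 := Units.ext exp_zero

lemma continuous_exp_of_real : Continuous (exp : A → A) := by
  let := NormedAlgebra.restrictScalars ℚ ℝ A
  exact exp_continuous

lemma continuous_expUnit : Continuous (expUnit : A → Aˣ) :=
  Units.continuous_iff.mpr ⟨continuous_exp_of_real, continuous_exp_of_real.comp continuous_neg⟩

lemma map_exp_nhds_zero : map exp (𝓝 (0 : A)) = 𝓝 1 := by
  simpa using (hasStrictFDerivAt_exp_zero (𝕂 := ℝ) (𝔸 := A)).map_nhds_eq_of_equiv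
    (f' := ContinuousLinearEquiv.refl ℝ A)

lemma hasStrictFDerivAt_exp_mul_exp (p q : Submodule ℝ A) :
    HasStrictFDerivAt (fun z : p × q => exp (z.1 : A) * exp (z.2 : A))
      (p.subtypeL.coprod q.subtypeL) 0 := by
  have hp := (hasStrictFDerivAt_exp_zero (𝕂 := ℝ) (𝔸 := A)).comp (0 : p × q)
    (p.subtypeL.comp (ContinuousLinearMap.fst ℝ p q)).hasStrictFDerivAt
  have hq := (hasStrictFDerivAt_exp_zero (𝕂 := ℝ) (𝔸 := A)).comp (0 : p × q)
    (q.subtypeL.comp (ContinuousLinearMap.snd ℝ p q)).hasStrictFDerivAt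
  refine (hp.mul' hq).congr_fderiv ?_
  ext z <;> simp

variable {H : Subgroup Aˣ} {𝔥 𝔨 : Submodule ℝ A}

lemma continuous_expMul : Continuous (expMul 𝔨 H) :=
  (continuous_exp_of_real.comp (continuous_subtype_val.comp continuous_fst)).mul
    (Units.continuous_val.comp (continuous_subtype_val.comp continuous_snd))

lemma eventually_exists_exp_eq_of_mem
    (hsub : ∀ᶠ X in 𝓝 (0 : A), (∃ u ∈ H, (u : A) = exp X) → X ∈ 𝔥)
    {W : Set 𝔥} (hW : W ∈ 𝓝 0) :
    ∀ᶠ a in 𝓝 (1 : A), (∃ u ∈ H, (u : A) = a) → ∃ Y ∈ W, exp (Y : A) = a := by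
  obtain ⟨O, hO, hOW⟩ := (mem_nhds_subtype _ 0 W).mp hW
  have hT := image_mem_map (m := exp) (hsub.and hO)
  rw [map_exp_nhds_zero] at hT
  filter_upwards [hT]
  rintro _ ⟨Z, ⟨hZ𝔥, hZO⟩, rfl⟩ hH
  exact ⟨⟨Z, hZ𝔥 hH⟩, hOW hZO, rfl⟩

lemma nhds_le_map_expMul (e : OpenPartialHomeomorph (𝔨 × 𝔥) A)
    (he : ⇑e = fun z => exp (z.1 : A) * exp (z.2 : A)) (hexp : ∀ Y : 𝔥, expUnit (Y : A) ∈ H)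
    {p : 𝔨 × H} (hp : (p.1, 0) ∈ e.source) :
    𝓝 (expMul 𝔨 H p) ≤ map (expMul 𝔨 H) (𝓝 p) := by
  obtain ⟨x₀, y₀⟩ := p
  let r : A → A := fun a => a * ((y₀ : Aˣ)⁻¹ : Aˣ)
  let lift : 𝔨 × 𝔥 → 𝔨 × H := fun z =>
    (z.1, ⟨expUnit (z.2 : A) * y₀, H.mul_mem (hexp z.2) y₀.2⟩)
  have hr : r (expMul 𝔨 H (x₀, y₀)) = e (x₀, 0) := by simp [r, expMul, he]
  have hlift : ∀ z, expMul 𝔨 H (lift z) = e z * (y₀ : Aˣ) := by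
    simp [lift, expMul, he, mul_assoc]
  have hrt : ∀ᶠ a in 𝓝 (expMul 𝔨 H (x₀, y₀)), r a ∈ e.target := by
    refine (continuous_mul_const _).continuousAt.preimage_mem_nhds ?_
    show e.target ∈ 𝓝 (r _)
    rw [hr]
    exact e.open_target.mem_nhds (e.map_source hp)
  refine le_map_of_right_inverse (mba := lift ∘ e.symm ∘ r) ?_ ?_
  · filter_upwards [hrt] with a ha
    simp [hlift, e.right_inv ha, r]
  · have hlift_cont : Continuous lift := continuous_fst.prodMk <|
      ((continuous_expUnit.comp (continuous_subtype_val.comp continuous_snd)).mul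
        continuous_const).subtype_mk _
    have hsymm : ContinuousAt e.symm (r (expMul 𝔨 H (x₀, y₀))) :=
      hr ▸ e.continuousAt_symm (e.map_source hp)
    have h := hlift_cont.continuousAt.comp (hsymm.comp (continuous_mul_const _).continuousAt)
    have h0 : (lift ∘ e.symm ∘ r) (expMul 𝔨 H (x₀, y₀)) = (x₀, y₀) := by
      simp [hr, e.left_inv hp, lift]
    rw [ContinuousAt, h0] at h
    exact h

lemma exists_mem_nhds_injOn_expMul (e : OpenPartialHomeomorph (𝔨 × 𝔥) A)
    (he : ⇑e = fun z => exp (z.1 : A) * exp (z.2 : A)) (he0 : ((0 : 𝔨), (0 : 𝔥)) ∈ e.source)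
    (hsub : ∀ᶠ X in 𝓝 (0 : A), (∃ u ∈ H, (u : A) = exp X) → X ∈ 𝔥) :
    ∃ V ∈ 𝓝 (0 : 𝔨), InjOn (expMul 𝔨 H) (V ×ˢ univ) := by
  obtain ⟨V₀, hV₀, W, hW, hVW⟩ := mem_nhds_prod_iff.mp (e.open_source.mem_nhds he0)
  have hquot :
      Tendsto (fun q : 𝔨 × 𝔨 => exp (-(q.2 : A)) * exp (q.1 : A)) (𝓝 (0, 0)) (𝓝 1) := by
    have hcont : Continuous fun q : 𝔨 × 𝔨 => exp (-(q.2 : A)) * exp (q.1 : A) :=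
      (continuous_exp_of_real.comp (continuous_subtype_val.comp continuous_snd).neg).mul
        (continuous_exp_of_real.comp (continuous_subtype_val.comp continuous_fst))
    simpa using hcont.tendsto (0, 0)
  have hev := inter_mem (prod_mem_nhds hV₀ hV₀)
    (hquot.eventually (eventually_exists_exp_eq_of_mem hsub hW))
  rw [nhds_prod_eq] at hev
  obtain ⟨V, hV, hVV⟩ := mem_prod_self_iff.mp hev
  refine ⟨V, hV, ?_⟩
  rintro ⟨x₁, y₁⟩ ⟨hx₁, -⟩ ⟨x₂, y₂⟩ ⟨hx₂, -⟩ h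
  obtain ⟨⟨h₁, h₂⟩, hlog⟩ := hVV (mk_mem_prod hx₁ hx₂)
  have hunits : (expUnit (x₂ : A))⁻¹ * expUnit (x₁ : A) = (y₂ : Aˣ) * (y₁ : Aˣ)⁻¹ := by
    have : expUnit (x₁ : A) * y₁ = expUnit (x₂ : A) * y₂ := Units.ext h
    rw [inv_mul_eq_iff_eq_mul, ← mul_assoc, ← this, mul_inv_cancel_right]
  obtain ⟨Y, hY, hYexp⟩ := hlog ⟨_, H.mul_mem y₂.2 (H.inv_mem y₁.2), by simp [← hunits]⟩
  have hx : x₁ = x₂ := by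
    refine congrArg Prod.fst (e.injOn (hVW (mk_mem_prod h₁ (mem_of_mem_nhds hW)))
      (hVW (mk_mem_prod h₂ hY)) ?_)
    simp [he, hYexp, ← mul_assoc, exp_mul_exp_neg]
  subst hx
  exact Prod.ext rfl (Subtype.ext (Units.ext ((expUnit (x₁ : A)).isUnit.mul_left_cancel h)))

end BanachAlgebra

/-- Let `G` be a Banach Lie group (realized as the unit group of a Banach algebra
`A`, so that `Lie(G) = A`) and `H ⊆ G` a Lie subgroup whose Lie algebra `𝔥`
admits a closed complement `𝔨` in `𝔤 = A`.  Then there is an open neighborhood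
`V` of `0` in `𝔨` such that `μ : V × H → G`, `(X, y) ↦ exp(X)·y`, is injective
and a local homeomorphism (local diffeomorphism) at every point. -/
theorem stmt15 {A : Type*} [NormedRing A] [NormedAlgebra ℝ A] [CompleteSpace A]
    (H : Subgroup Aˣ) (𝔥 𝔨 : Submodule ℝ A)
    -- `𝔥` is the Lie algebra of `H` (via one-parameter subgroups)
    (h𝔥 : (𝔥 : Set A) = {X : A | ∀ t : ℝ, ∃ u ∈ H, (u : A) = NormedSpace.exp (t • X)})
    (h𝔥closed : IsClosed (𝔥 : Set A))
    (h𝔨closed : IsClosed (𝔨 : Set A))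
    (hcompl : IsCompl 𝔨 𝔥)
    -- `H` is a Lie subgroup: near `1`, `H` is exactly the exponential of `𝔥`
    (hsub : ∃ U ∈ nhds (0 : A), ∀ X ∈ U,
      (∃ u ∈ H, (u : A) = NormedSpace.exp X) → X ∈ 𝔥) :
    ∃ V : Set 𝔨, IsOpen V ∧ (0 : 𝔨) ∈ V ∧
      Function.Injective
        (fun p : V × H => NormedSpace.exp ((p.1 : 𝔨) : A) * ((p.2 : Aˣ) : A)) ∧
      IsLocalHomeomorph
        (fun p : V × H => NormedSpace.exp ((p.1 : 𝔨) : A) * ((p.2 : Aˣ) : A)) := by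
  have hexp : ∀ Y : 𝔥, expUnit (Y : A) ∈ H := fun Y => by
    have hY : (Y : A) ∈ (𝔥 : Set A) := Y.2
    rw [h𝔥] at hY
    obtain ⟨u, hu, hu_eq⟩ := hY 1
    rwa [← Units.ext (v := expUnit (Y : A)) (by simpa using hu_eq)]
  have := h𝔨closed.completeSpace_coe
  have := h𝔥closed.completeSpace_coe
  have hφ : HasStrictFDerivAt (fun z : 𝔨 × 𝔥 => exp (z.1 : A) * exp (z.2 : A))
      (𝔨.prodEquivOfIsTopCompl 𝔥
        (Submodule.IsCompl.isTopCompl_of_isClosed hcompl h𝔨closed h𝔥closed) : 𝔨 × 𝔥 →L[ℝ] A) 0 :=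
    hasStrictFDerivAt_exp_mul_exp 𝔨 𝔥
  let e := hφ.toOpenPartialHomeomorph _
  have he0 : ((0 : 𝔨), (0 : 𝔥)) ∈ e.source := hφ.mem_toOpenPartialHomeomorph_source
  obtain ⟨V₁, hV₁, hinj⟩ := exists_mem_nhds_injOn_expMul e rfl he0
    (eventually_iff_exists_mem.mpr hsub)
  have hsrc : ∀ᶠ x in 𝓝 (0 : 𝔨), (x, (0 : 𝔥)) ∈ e.source :=
    (Continuous.prodMk_left (0 : 𝔥)).continuousAt.preimage_mem_nhds (e.open_source.mem_nhds he0)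
  obtain ⟨V, hVsub, hVo, hV0⟩ := mem_nhds_iff.mp (inter_mem hV₁ hsrc)
  have hV : IsOpenEmbedding (expMul 𝔨 H ∘ Prod.map ((↑) : V → 𝔨) id) := by
    refine (hVo.isOpenEmbedding_subtypeVal.prodMap .id).comp_of_injOn_of_nhds_le
      continuous_expMul (hinj.mono ?_) ?_
    · rintro _ ⟨⟨x, y⟩, rfl⟩
      exact ⟨(hVsub x.2).1, mem_univ _⟩
    · rintro _ ⟨⟨x, y⟩, rfl⟩
      exact nhds_le_map_expMul e rfl hexp (hVsub x.2).2
  exact ⟨V, hVo, hV0, hV.injective, hV.isLocalHomeomorph⟩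
end
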